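/- arXiv:2105.13026 — 2 statements merged into one kernel-verified Lean document; each statement's English description precedes it below -/
import Mathlib

section
/- The polyproduct ⊛ on functions f : M → ℂ^d, defined by (f ⊛ g)_j(w) = f_j(w) g_j(w) − w Σ_{l≠j} σ_{jl} (f_j(w) − f_l(w))(g_j(w) − g_l(w)), is associative, making the vector space of functions f : M → ℂ^d a commutative unital complex algebra with unit (1,…,1)ᵗ. -/
open Polynomial Finset

/-- `σ_{jl} = 1/(p'(λ_l)(λ_j - λ_l))` where `p = ∏ (X - λ_i)`. -/
noncomputable def sigma {d : ℕ} (lam : Fin d → ℂ) (j l : Fin d) : ℂ :=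
  1 / ((Polynomial.derivative (∏ i, (X - C (lam i)))).eval (lam l) * (lam j - lam l))

/-- The polyproduct `f ⊛ g` of `ℂ^d`-valued functions, componentwise. -/
noncomputable def polyprod {d : ℕ} (lam : Fin d → ℂ) (f g : ℂ → Fin d → ℂ)
    (w : ℂ) (j : Fin d) : ℂ :=
  f w j * g w j -
    w * ∑ l ∈ Finset.univ.erase j,
      sigma lam j l * (f w j - f w l) * (g w j - g w l)

lemma eval_deriv {d : ℕ} (lam : Fin d → ℂ) (l : Fin d) :
    (Polynomial.derivative (∏ i, (X - C (lam i)))).eval (lam l)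
      = ∏ i ∈ Finset.univ.erase l, (lam l - lam i) := by
  rw [← Lagrange.nodal_eq, Lagrange.eval_nodal_derivative_eval_node_eq (Finset.mem_univ l),
    Lagrange.eval_nodal]

lemma sigma_eq {d : ℕ} (lam : Fin d → ℂ) (j l : Fin d) :
    sigma lam j l = 1 / ((∏ i ∈ Finset.univ.erase l, (lam l - lam i)) * (lam j - lam l)) := by
  rw [sigma, eval_deriv]

lemma sigma_key {d : ℕ} (lam : Fin d → ℂ) {j l m : Fin d}
    (hjl : j ≠ l) (hjm : j ≠ m) (hlm : l ≠ m) :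
    sigma lam j l * sigma lam j m
      = sigma lam j l * sigma lam l m + sigma lam j m * sigma lam m l := by
  rw [sigma_eq lam j l, sigma_eq lam j m, sigma_eq lam l m, sigma_eq lam m l]
  set A := ∏ i ∈ Finset.univ.erase l, (lam l - lam i) with hA
  set B := ∏ i ∈ Finset.univ.erase m, (lam m - lam i) with hB
  by_cases h1 : A = 0
  · rw [h1]; simp
  by_cases h2 : B = 0
  · rw [h2]; simp
  have hfA := Finset.prod_ne_zero_iff.mp h1
  have hfB := Finset.prod_ne_zero_iff.mp h2
  have h_lj : lam l - lam j ≠ 0 :=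
    hfA j (Finset.mem_erase.mpr ⟨hjl, Finset.mem_univ j⟩)
  have h_lm : lam l - lam m ≠ 0 :=
    hfA m (Finset.mem_erase.mpr ⟨hlm.symm, Finset.mem_univ m⟩)
  have h_mj : lam m - lam j ≠ 0 :=
    hfB j (Finset.mem_erase.mpr ⟨hjm, Finset.mem_univ j⟩)
  have h_ml : lam m - lam l ≠ 0 :=
    hfB l (Finset.mem_erase.mpr ⟨hlm, Finset.mem_univ l⟩)
  have d1 : lam j - lam l ≠ 0 := sub_ne_zero.mpr (sub_ne_zero.mp h_lj).symm
  have d2 : lam j - lam m ≠ 0 := sub_ne_zero.mpr (sub_ne_zero.mp h_mj).symm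
  field_simp
  ring

/-- Auxiliary bilinear sum. -/
noncomputable def Ss {d : ℕ} (s : Fin d → Fin d → ℂ) (a b : Fin d → ℂ) (i : Fin d) : ℂ :=
  ∑ l ∈ Finset.univ.erase i, s i l * (a i - a l) * (b i - b l)

/-- The "G" trilinear expression. -/
noncomputable def GG {d : ℕ} (a b c : Fin d → ℂ) (j l m : Fin d) : ℂ :=
  ((a j - a m) * (b j - b m) - (a l - a m) * (b l - b m)) * (c j - c l)
    + (a j - a l) * (b j - b l) * (c j - c m)

lemma T_canon {d : ℕ} (s : Fin d → Fin d → ℂ)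
    (hkey : ∀ j l m : Fin d, j ≠ l → j ≠ m → l ≠ m →
      s j l * s j m = s j l * s l m + s j m * s m l)
    (a b c : Fin d → ℂ) (j : Fin d) :
    ∑ l ∈ Finset.univ.erase j, s j l * (Ss s a b j - Ss s a b l) * (c j - c l)
      = (∑ l ∈ Finset.univ.erase j,
          (s j l * s j l * ((a j - a l) * (b j - b l) * (c j - c l))
            - s j l * s l j * ((a l - a j) * (b l - b j) * (c j - c l))))
        + ∑ l ∈ Finset.univ.erase j, ∑ m ∈ (Finset.univ.erase j).erase l,
            s j l * s l m * GG a b c j l m := by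
  have step1 : ∑ l ∈ Finset.univ.erase j, s j l * (Ss s a b j - Ss s a b l) * (c j - c l)
      = ∑ l ∈ Finset.univ.erase j,
          ((∑ m ∈ Finset.univ.erase j,
              s j l * s j m * ((a j - a m) * (b j - b m)) * (c j - c l))
            - ∑ m ∈ Finset.univ.erase l,
              s j l * s l m * ((a l - a m) * (b l - b m)) * (c j - c l)) := by
    refine Finset.sum_congr rfl fun l hl => ?_
    rw [show s j l * (Ss s a b j - Ss s a b l) * (c j - c l)
        = Ss s a b j * (s j l * (c j - c l)) - Ss s a b l * (s j l * (c j - c l)) from by ring]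
    simp only [Ss]
    rw [Finset.sum_mul, Finset.sum_mul]
    congr 1 <;> exact Finset.sum_congr rfl fun m _ => by ring
  rw [step1, Finset.sum_sub_distrib]
  have step2 : ∀ l ∈ Finset.univ.erase j,
      (∑ m ∈ Finset.univ.erase j, s j l * s j m * ((a j - a m) * (b j - b m)) * (c j - c l))
        = s j l * s j l * ((a j - a l) * (b j - b l)) * (c j - c l)
          + ∑ m ∈ (Finset.univ.erase j).erase l,
              s j l * s j m * ((a j - a m) * (b j - b m)) * (c j - c l) :=
    fun l hl => (Finset.add_sum_erase _ _ hl).symm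
  have step3 : ∀ l ∈ Finset.univ.erase j,
      (∑ m ∈ Finset.univ.erase l, s j l * s l m * ((a l - a m) * (b l - b m)) * (c j - c l))
        = s j l * s l j * ((a l - a j) * (b l - b j)) * (c j - c l)
          + ∑ m ∈ (Finset.univ.erase j).erase l,
              s j l * s l m * ((a l - a m) * (b l - b m)) * (c j - c l) := by
    intro l hl
    have hlj : l ≠ j := Finset.ne_of_mem_erase hl
    have hj : j ∈ Finset.univ.erase l :=
      Finset.mem_erase.mpr ⟨hlj.symm, Finset.mem_univ j⟩
    rw [← Finset.add_sum_erase _ _ hj]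
    congr 1
    rw [Finset.erase_right_comm]
  rw [Finset.sum_congr rfl step2, Finset.sum_congr rfl step3,
    Finset.sum_add_distrib, Finset.sum_add_distrib]
  have hsingle : (∑ l ∈ Finset.univ.erase j,
        s j l * s j l * ((a j - a l) * (b j - b l)) * (c j - c l))
      - ∑ l ∈ Finset.univ.erase j,
        s j l * s l j * ((a l - a j) * (b l - b j)) * (c j - c l)
      = ∑ l ∈ Finset.univ.erase j,
          (s j l * s j l * ((a j - a l) * (b j - b l) * (c j - c l))
            - s j l * s l j * ((a l - a j) * (b l - b j) * (c j - c l))) := by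
    rw [← Finset.sum_sub_distrib]
    exact Finset.sum_congr rfl fun l _ => by ring
  have hF : ∑ l ∈ Finset.univ.erase j, ∑ m ∈ (Finset.univ.erase j).erase l,
        s j l * s j m * ((a j - a m) * (b j - b m)) * (c j - c l)
      = (∑ l ∈ Finset.univ.erase j, ∑ m ∈ (Finset.univ.erase j).erase l,
          s j l * s l m * ((a j - a m) * (b j - b m)) * (c j - c l))
        + ∑ l ∈ Finset.univ.erase j, ∑ m ∈ (Finset.univ.erase j).erase l,
          s j m * s m l * ((a j - a m) * (b j - b m)) * (c j - c l) := by
    rw [← Finset.sum_add_distrib]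
    refine Finset.sum_congr rfl fun l hl => ?_
    rw [← Finset.sum_add_distrib]
    refine Finset.sum_congr rfl fun m hm => ?_
    have hlj : l ≠ j := Finset.ne_of_mem_erase hl
    have hml : m ≠ l := Finset.ne_of_mem_erase hm
    have hmj : m ≠ j := Finset.ne_of_mem_erase (Finset.mem_of_mem_erase hm)
    linear_combination ((a j - a m) * (b j - b m) * (c j - c l)) *
      hkey j l m hlj.symm hmj.symm (Ne.symm hml)
  have hswap : ∑ l ∈ Finset.univ.erase j, ∑ m ∈ (Finset.univ.erase j).erase l,
        s j m * s m l * ((a j - a m) * (b j - b m)) * (c j - c l)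
      = ∑ l ∈ Finset.univ.erase j, ∑ m ∈ (Finset.univ.erase j).erase l,
        s j l * s l m * ((a j - a l) * (b j - b l)) * (c j - c m) := by
    refine Finset.sum_comm' ?_
    intro x y
    simp only [Finset.mem_erase, Finset.mem_univ, and_true]
    tauto
  have hcomb : (∑ l ∈ Finset.univ.erase j, ∑ m ∈ (Finset.univ.erase j).erase l,
        s j l * s l m * ((a j - a m) * (b j - b m)) * (c j - c l))
      + (∑ l ∈ Finset.univ.erase j, ∑ m ∈ (Finset.univ.erase j).erase l,
        s j l * s l m * ((a j - a l) * (b j - b l)) * (c j - c m))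
      - ∑ l ∈ Finset.univ.erase j, ∑ m ∈ (Finset.univ.erase j).erase l,
        s j l * s l m * ((a l - a m) * (b l - b m)) * (c j - c l)
      = ∑ l ∈ Finset.univ.erase j, ∑ m ∈ (Finset.univ.erase j).erase l,
          s j l * s l m * GG a b c j l m := by
    rw [← Finset.sum_add_distrib, ← Finset.sum_sub_distrib]
    refine Finset.sum_congr rfl fun l _ => ?_
    rw [← Finset.sum_add_distrib, ← Finset.sum_sub_distrib]
    refine Finset.sum_congr rfl fun m _ => ?_
    simp only [GG]; ring
  linear_combination hsingle + hF + hswap + hcomb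

lemma T_symm {d : ℕ} (s : Fin d → Fin d → ℂ)
    (hkey : ∀ j l m : Fin d, j ≠ l → j ≠ m → l ≠ m →
      s j l * s j m = s j l * s l m + s j m * s m l)
    (a b c : Fin d → ℂ) (j : Fin d) :
    ∑ l ∈ Finset.univ.erase j, s j l * (Ss s a b j - Ss s a b l) * (c j - c l)
      = ∑ l ∈ Finset.univ.erase j, s j l * (Ss s c b j - Ss s c b l) * (a j - a l) := by
  rw [T_canon s hkey a b c j, T_canon s hkey c b a j]
  congr 1
  · exact Finset.sum_congr rfl fun l _ => by ring
  · refine Finset.sum_congr rfl fun l _ => Finset.sum_congr rfl fun m _ => ?_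
    simp only [GG]; ring

lemma assoc_pt {d : ℕ} (s : Fin d → Fin d → ℂ)
    (hkey : ∀ j l m : Fin d, j ≠ l → j ≠ m → l ≠ m →
      s j l * s j m = s j l * s l m + s j m * s m l)
    (w : ℂ) (a b c : Fin d → ℂ) (j : Fin d) :
    (a j * b j - w * Ss s a b j) * c j -
        w * ∑ l ∈ Finset.univ.erase j,
          s j l * ((a j * b j - w * Ss s a b j) - (a l * b l - w * Ss s a b l)) * (c j - c l)
      = a j * (b j * c j - w * Ss s b c j) -
        w * ∑ l ∈ Finset.univ.erase j,
          s j l * (a j - a l) *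
            ((b j * c j - w * Ss s b c j) - (b l * c l - w * Ss s b c l)) := by
  have hL : ∑ l ∈ Finset.univ.erase j,
        s j l * ((a j * b j - w * Ss s a b j) - (a l * b l - w * Ss s a b l)) * (c j - c l)
      = a j * Ss s b c j
        + (∑ l ∈ Finset.univ.erase j, s j l * b l * (a j - a l) * (c j - c l))
        - w * ∑ l ∈ Finset.univ.erase j,
            s j l * (Ss s a b j - Ss s a b l) * (c j - c l) := by
    have e : ∀ l ∈ Finset.univ.erase j,
        s j l * ((a j * b j - w * Ss s a b j) - (a l * b l - w * Ss s a b l)) * (c j - c l)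
          = a j * (s j l * (b j - b l) * (c j - c l))
            + s j l * b l * (a j - a l) * (c j - c l)
            - w * (s j l * (Ss s a b j - Ss s a b l) * (c j - c l)) :=
      fun l _ => by ring
    rw [Finset.sum_congr rfl e, Finset.sum_sub_distrib, Finset.sum_add_distrib,
      ← Finset.mul_sum, ← Finset.mul_sum]
    rfl
  have hR : ∑ l ∈ Finset.univ.erase j,
        s j l * (a j - a l) *
          ((b j * c j - w * Ss s b c j) - (b l * c l - w * Ss s b c l))
      = c j * Ss s a b j
        + (∑ l ∈ Finset.univ.erase j, s j l * b l * (a j - a l) * (c j - c l))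
        - w * ∑ l ∈ Finset.univ.erase j,
            s j l * (a j - a l) * (Ss s b c j - Ss s b c l) := by
    have e : ∀ l ∈ Finset.univ.erase j,
        s j l * (a j - a l) *
            ((b j * c j - w * Ss s b c j) - (b l * c l - w * Ss s b c l))
          = c j * (s j l * (a j - a l) * (b j - b l))
            + s j l * b l * (a j - a l) * (c j - c l)
            - w * (s j l * (a j - a l) * (Ss s b c j - Ss s b c l)) :=
      fun l _ => by ring
    rw [Finset.sum_congr rfl e, Finset.sum_sub_distrib, Finset.sum_add_distrib,
      ← Finset.mul_sum, ← Finset.mul_sum]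
    rfl
  have hcb : ∀ i, Ss s c b i = Ss s b c i :=
    fun i => Finset.sum_congr rfl fun l _ => by ring
  have hT : ∑ l ∈ Finset.univ.erase j,
        s j l * (Ss s a b j - Ss s a b l) * (c j - c l)
      = ∑ l ∈ Finset.univ.erase j,
        s j l * (a j - a l) * (Ss s b c j - Ss s b c l) := by
    rw [T_symm s hkey a b c j]
    exact Finset.sum_congr rfl fun l _ => by rw [hcb, hcb]; ring
  rw [hL, hR, hT]
  ring

theorem stmt5 {d : ℕ} (lam : Fin d → ℂ) (M : Set ℂ) :
    (∀ f g h : ℂ → Fin d → ℂ, ∀ w ∈ M,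
        polyprod lam (polyprod lam f g) h w = polyprod lam f (polyprod lam g h) w) ∧
    (∀ f g : ℂ → Fin d → ℂ, ∀ w ∈ M, polyprod lam f g w = polyprod lam g f w) ∧
    (∀ f : ℂ → Fin d → ℂ, ∀ w ∈ M, polyprod lam (fun _ _ => 1) f w = f w) := by
  refine ⟨?_, ?_, ?_⟩
  · intro f g h w _
    funext j
    have hkey : ∀ j l m : Fin d, j ≠ l → j ≠ m → l ≠ m →
        sigma lam j l * sigma lam j m
          = sigma lam j l * sigma lam l m + sigma lam j m * sigma lam m l :=
      fun _ _ _ h1 h2 h3 => sigma_key lam h1 h2 h3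
    simpa only [polyprod, Ss] using assoc_pt (sigma lam) hkey w (f w) (g w) (h w) j
  · intro f g w _
    funext j
    simp only [polyprod]
    congr 1
    · ring
    · congr 1
      exact Finset.sum_congr rfl fun l _ => by ring
  · intro f w _
    funext j
    simp [polyprod]
end

section
/- For each z ∈ K = p^{-1}(M), the functional χ_z : f ↦ Σ_{j=1}^d δ_j(z) f_j(p(z)) is a character (multiplicative linear functional mapping the unit to 1) on the algebra of functions f : M → ℂ^d equipped with the polyproduct ⊛. -/
open Polynomial Finset

/-- Lagrange basis polynomial `δ_j` evaluated at `z`. -/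
noncomputable def lagrange {d : ℕ} (lam : Fin d → ℂ) (j : Fin d) (z : ℂ) : ℂ :=
  ∏ l ∈ Finset.univ.erase j, (z - lam l) / (lam j - lam l)

/-- The character `χ_z : f ↦ Σ_j δ_j(z) f_j(p(z))`. -/
noncomputable def chi {d : ℕ} (lam : Fin d → ℂ) (z : ℂ) (f : ℂ → Fin d → ℂ) : ℂ :=
  ∑ j, lagrange lam j z * f ((∏ i, (X - C (lam i))).eval z) j

section aux
variable {d : ℕ}

lemma deriv_eval (lam : Fin d → ℂ) (l : Fin d) :
    (Polynomial.derivative (∏ i, (X - C (lam i)))).eval (lam l)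
      = ∏ i ∈ Finset.univ.erase l, (lam l - lam i) := by
  have h : (∏ i, (X - C (lam i))) = Lagrange.nodal Finset.univ lam := rfl
  rw [h, Lagrange.eval_nodal_derivative_eval_node_eq (Finset.mem_univ l),
    Lagrange.eval_nodal]

lemma deriv_ne (lam : Fin d → ℂ) (hinj : Function.Injective lam) (l : Fin d) :
    (Polynomial.derivative (∏ i, (X - C (lam i)))).eval (lam l) ≠ 0 := by
  rw [deriv_eval]
  apply Finset.prod_ne_zero_iff.2
  intro i hi
  exact sub_ne_zero_of_ne (fun h => (Finset.mem_erase.1 hi).1 (hinj h).symm)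

lemma key_rel (lam : Fin d → ℂ) (hinj : Function.Injective lam) (z : ℂ) (l : Fin d) :
    (z - lam l) * ((Polynomial.derivative (∏ i, (X - C (lam i)))).eval (lam l))
        * lagrange lam l z = (∏ i, (X - C (lam i))).eval z := by
  rw [deriv_eval, lagrange, eval_prod]
  simp only [eval_sub, eval_X, eval_C]
  rw [mul_assoc, ← Finset.prod_mul_distrib,
    ← Finset.mul_prod_erase _ _ (Finset.mem_univ l)]
  congr 1
  apply Finset.prod_congr rfl
  intro i hi
  have : lam l - lam i ≠ 0 :=
    sub_ne_zero_of_ne (fun h => (Finset.mem_erase.1 hi).1 (hinj h).symm)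
  field_simp

lemma pair_id (lam : Fin d → ℂ) (hinj : Function.Injective lam) (z : ℂ)
    {j l : Fin d} (hjl : j ≠ l) :
    (∏ i, (X - C (lam i))).eval z * (lagrange lam j z * sigma lam j l)
      + (∏ i, (X - C (lam i))).eval z * (lagrange lam l z * sigma lam l j)
      = lagrange lam j z * lagrange lam l z := by
  have hDl := deriv_ne lam hinj l
  have hDj := deriv_ne lam hinj j
  have hjl' : lam j - lam l ≠ 0 := sub_ne_zero_of_ne (fun h => hjl (hinj h))
  have hlj' : lam l - lam j ≠ 0 := sub_ne_zero_of_ne (fun h => hjl.symm (hinj h))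
  have h1 := key_rel lam hinj z l
  have h2 := key_rel lam hinj z j
  nth_rewrite 1 [← h1]
  nth_rewrite 1 [← h2]
  rw [sigma, sigma]
  field_simp
  ring

lemma sum_lagrange (lam : Fin d → ℂ) (hinj : Function.Injective lam) (z : ℂ)
    (hd : 1 ≤ d) : ∑ j, lagrange lam j z = 1 := by
  have hne : (Finset.univ : Finset (Fin d)).Nonempty := by
    simpa [Finset.univ_nonempty_iff] using Fin.pos_iff_nonempty.1 hd
  have := Lagrange.sum_basis (s := Finset.univ) (v := lam) hinj.injOn hne
  have h2 := congrArg (eval z) this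
  rw [eval_finset_sum, eval_one] at h2
  rw [← h2]
  apply Finset.sum_congr rfl
  intro j _
  rw [Lagrange.basis, eval_prod, lagrange]
  apply Finset.prod_congr rfl
  intro i _
  rw [Lagrange.basisDivisor]
  simp [div_eq_inv_mul]

lemma sum_split4 (t1 t2 t3 t4 : Fin d → Fin d → ℂ) :
    (∑ j, ∑ l, (t1 j l + t2 j l - t3 j l - t4 j l))
      = (∑ j, ∑ l, t1 j l) + (∑ j, ∑ l, t2 j l)
        - (∑ j, ∑ l, t3 j l) - (∑ j, ∑ l, t4 j l) := by
  simp [Finset.sum_add_distrib, Finset.sum_sub_distrib]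

end aux

theorem stmt8 {d : ℕ} (hd : 1 ≤ d) (lam : Fin d → ℂ) (hinj : Function.Injective lam)
    (M : Set ℂ) (z : ℂ) (hz : (∏ i, (X - C (lam i))).eval z ∈ M) :
    (∀ f g : ℂ → Fin d → ℂ, chi lam z (polyprod lam f g) = chi lam z f * chi lam z g) ∧
    (∀ f g : ℂ → Fin d → ℂ, chi lam z (f + g) = chi lam z f + chi lam z g) ∧
    (∀ (c : ℂ) (f : ℂ → Fin d → ℂ), chi lam z (c • f) = c * chi lam z f) ∧
    chi lam z (fun _ _ => 1) = 1 := by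
  set w : ℂ := (∏ i, (X - C (lam i))).eval z with hw
  set a : Fin d → ℂ := fun j => lagrange lam j z with ha
  have hsum : ∑ j, a j = 1 := sum_lagrange lam hinj z hd
  refine ⟨?_, ?_, ?_, ?_⟩
  · intro f g
    set F : Fin d → ℂ := fun j => f w j with hF
    set G : Fin d → ℂ := fun j => g w j with hG
    show ∑ j, a j * polyprod lam f g w j = (∑ j, a j * F j) * (∑ j, a j * G j)
    -- rewrite erase sums as full sums
    have herase : ∀ j : Fin d,
        ∑ l ∈ Finset.univ.erase j, sigma lam j l * (F j - F l) * (G j - G l)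
          = ∑ l, sigma lam j l * (F j - F l) * (G j - G l) := by
      intro j
      exact Finset.sum_erase _ (by simp)
    set T : ℂ := ∑ j, ∑ l, a j * (w * (sigma lam j l * (F j - F l) * (G j - G l)))
      with hT
    have hLHS : ∑ j, a j * polyprod lam f g w j = (∑ j, a j * (F j * G j)) - T := by
      rw [hT, ← Finset.sum_sub_distrib]
      apply Finset.sum_congr rfl
      intro j _
      show a j * polyprod lam f g w j = _
      rw [polyprod]
      show a j * (F j * G j - w * ∑ l ∈ Finset.univ.erase j,
          sigma lam j l * (F j - F l) * (G j - G l)) = _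
      rw [herase j, mul_sub, Finset.mul_sum, Finset.mul_sum]
    set S : ℂ := ∑ j, ∑ l, a j * a l * ((F j - F l) * (G j - G l)) with hS
    have hTT : T + T = S := by
      have hswap : T = ∑ j, ∑ l, a l * (w * (sigma lam l j * (F j - F l) * (G j - G l))) := by
        rw [hT, Finset.sum_comm]
        apply Finset.sum_congr rfl
        intro j _
        apply Finset.sum_congr rfl
        intro l _
        ring_nf
      nth_rewrite 2 [hswap]
      rw [hT, hS, ← Finset.sum_add_distrib]
      apply Finset.sum_congr rfl
      intro j _
      rw [← Finset.sum_add_distrib]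
      apply Finset.sum_congr rfl
      intro l _
      by_cases hjl : j = l
      · subst hjl; simp
      · have hp : w * (a j * sigma lam j l) + w * (a l * sigma lam l j)
            = a j * a l := pair_id lam hinj z hjl
        linear_combination ((F j - F l) * (G j - G l)) * hp
    have hSval : S = (∑ j, a j * (F j * G j)) + (∑ j, a j * (F j * G j))
        - (∑ j, a j * F j) * (∑ j, a j * G j) - (∑ j, a j * F j) * (∑ j, a j * G j) := by
      have e1 : S = (∑ j, ∑ l, a j * (F j * G j) * a l)
          + (∑ j, ∑ l, a l * (F l * G l) * a j)
          - (∑ j, ∑ l, (a j * F j) * (a l * G l))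
          - (∑ j, ∑ l, (a j * G j) * (a l * F l)) := by
        rw [hS, ← sum_split4]
        apply Finset.sum_congr rfl
        intro j _
        apply Finset.sum_congr rfl
        intro l _
        ring
      rw [e1]
      congr 1
      congr 1
      congr 1
      · apply Finset.sum_congr rfl
        intro j _
        rw [← Finset.mul_sum, hsum, mul_one]
      · rw [Finset.sum_comm]
        apply Finset.sum_congr rfl
        intro j _
        rw [← Finset.mul_sum, hsum, mul_one]
      · rw [← Finset.sum_mul_sum]
      · rw [← Finset.sum_mul_sum]
        exact mul_comm _ _
    rw [hLHS]
    linear_combination (-(1/2) : ℂ) * hTT - (1/2 : ℂ) * hSval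
  · intro f g
    simp [chi, Pi.add_apply, mul_add, Finset.sum_add_distrib]
  · intro c f
    show ∑ j, a j * (c • f) w j = c * ∑ j, a j * f w j
    rw [Finset.mul_sum]
    apply Finset.sum_congr rfl
    intro j _
    simp [Pi.smul_apply, smul_eq_mul]
    ring
  · show ∑ j, a j * (1 : ℂ) = 1
    simpa using hsum
end
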